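/- arXiv:2604.11764 — 10 statements merged into one kernel-verified Lean document; each statement's English description precedes it below -/
import Mathlib

section
/- For finite sets A, B₁, B₂ of natural numbers, if mex B₁ = mex B₂, then mex(A : B₁) = mex(A : B₂), where A : B is defined as A ∪ {x_i | i ∈ B} with x_0 < x_1 < x_2 < ⋯ being the increasing enumeration of ℕ \ A, and mex S denotes the minimum natural number not in S. -/
/-- mex (minimum excludant) of a set of naturals. -/
noncomputable def mexS (A : Set ℕ) : ℕ := sInf {n | n ∉ A}

/-- The colon operation on sets of naturals:
`A : B = A ∪ {x_i | i ∈ B}` where `x_0 < x_1 < ⋯` enumerates `ℕ \ A`. -/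
noncomputable def colonS (A B : Set ℕ) : Set ℕ :=
  A ∪ (fun i => Nat.nth (fun n => n ∉ A) i) '' B

/-- Elementwise addition of a natural number: `A + b = {a + b | a ∈ A}`. -/
def addS (A : Set ℕ) (b : ℕ) : Set ℕ := (· + b) '' A

/-- Elementwise bitwise XOR: `A ⊕ x = {a XOR x | a ∈ A}`. -/
def xorS (A : Set ℕ) (x : ℕ) : Set ℕ := (fun a => a ^^^ x) '' A

/-- `Gn n` is the set of (hereditarily finite) games born by day `n`:
`Gn 0 = {∅}`, `Gn (n+1) = 2^(Gn n)`. -/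
noncomputable def Gn : ℕ → ZFSet
  | 0 => {∅}
  | n + 1 => ZFSet.powerset (Gn n)

/-- An impartial game: a hereditarily finite set. -/
def IsGame (G : ZFSet) : Prop := ∃ n, G ∈ Gn n

/-- Birthday: least `n` with `G ∈ Gn n`. -/
noncomputable def birthday (G : ZFSet) : ℕ := sInf {n | G ∈ Gn n}

/-- `g` is the Grundy-number function: `g G = mex {g G' | G' ∈ G}`. -/
def IsGrundy (g : ZFSet → ℕ) : Prop :=
  ∀ G : ZFSet, g G = mexS {n | ∃ x ∈ G, g x = n}

/-- The variation set of `G` with respect to a Grundy function `g`: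
the set of Grundy values of the options of `G`. -/
def vset (g : ZFSet → ℕ) (G : ZFSet) : Set ℕ := {n | ∃ x ∈ G, g x = n}

/-- `f` is the ordinal sum with substitution: `f G H Ĥ = G :_{Ĥ} H`,
defined by `G :_{Ĥ} H = {G' :_{Ĥ} Ĥ | G' ∈ G} ∪ {G :_{Ĥ} H' | H' ∈ H}`. -/
def IsOSub (f : ZFSet → ZFSet → ZFSet → ZFSet) : Prop :=
  ∀ G H Hh x : ZFSet,
    x ∈ f G H Hh ↔ (∃ G' ∈ G, x = f G' Hh Hh) ∨ (∃ H' ∈ H, x = f G H' Hh)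

/-- `s` is the ordinal sum: `G : H = {G' | G' ∈ G} ∪ {G : H' | H' ∈ H}`. -/
def IsOSum (s : ZFSet → ZFSet → ZFSet) : Prop :=
  ∀ G H x : ZFSet, x ∈ s G H ↔ x ∈ G ∨ (∃ H' ∈ H, x = s G H')

/-- `d` is the disjunctive sum: `G + H = {G' + H | G' ∈ G} ∪ {G + H' | H' ∈ H}`. -/
def IsDSum (d : ZFSet → ZFSet → ZFSet) : Prop :=
  ∀ G H x : ZFSet, x ∈ d G H ↔ (∃ G' ∈ G, x = d G' H) ∨ (∃ H' ∈ H, x = d G H')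

/-- The nimber `*n = {*m | m < n}`. -/
noncomputable def nim : ℕ → ZFSet
  | 0 => ∅
  | n + 1 => insert (nim n) (nim n)

/-- Left-associated chain of ordinal sums with substitution:
`chain f X Xh s k = X s :_{Xh (s+1)} X (s+1) :_{Xh (s+2)} ⋯ :_{Xh (s+k)} X (s+k)`. -/
noncomputable def chain (f : ZFSet → ZFSet → ZFSet → ZFSet)
    (X Xh : ℕ → ZFSet) (s : ℕ) : ℕ → ZFSet
  | 0 => X s
  | k + 1 => f (chain f X Xh s k) (X (s + k + 1)) (Xh (s + k + 1))

lemma mexS_colonS (A B : Set ℕ) (hA : A.Finite) (hB : B.Finite) :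
    mexS (colonS A B) = Nat.nth (fun n => n ∉ A) (mexS B) := by
  classical
  set p : ℕ → Prop := fun n => n ∉ A with hp
  have hpi : (setOf p).Infinite := by
    have : setOf p = Aᶜ := rfl
    rw [this]
    exact Set.Finite.infinite_compl hA
  have hBc : {n | n ∉ B}.Nonempty := by
    have : ({n | n ∉ B} : Set ℕ).Infinite := Set.Finite.infinite_compl hB
    exact this.nonempty
  set m := mexS B with hm
  have hmB : m ∉ B := Nat.sInf_mem hBc
  have hlb : ∀ k, k ∉ B → m ≤ k := fun k hk => Nat.sInf_le hk
  have hinj := Nat.nth_injective hpi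
  -- nth p m is not in colonS A B
  have hmem : Nat.nth p m ∉ colonS A B := by
    intro hcon
    rcases hcon with hcon | ⟨i, hi, hie⟩
    · exact (Nat.nth_mem_of_infinite hpi m) hcon
    · exact hmB (hinj hie ▸ hi)
  -- every n not in colonS A B is ≥ nth p m
  have hle : ∀ n, n ∉ colonS A B → Nat.nth p m ≤ n := by
    intro n hn
    have hnA : p n := fun hcon => hn (Or.inl hcon)
    have hne : Nat.nth p (Nat.count p n) = n := Nat.nth_count hnA
    have hiB : Nat.count p n ∉ B := by
      intro hiB
      exact hn (Or.inr ⟨Nat.count p n, hiB, hne⟩)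
    calc Nat.nth p m ≤ Nat.nth p (Nat.count p n) :=
          (Nat.nth_le_nth hpi).mpr (hlb _ hiB)
      _ = n := hne
  apply le_antisymm
  · exact Nat.sInf_le hmem
  · exact le_csInf ⟨_, hmem⟩ hle

theorem stmt0 (A B1 B2 : Set ℕ) (hA : A.Finite) (hB1 : B1.Finite) (hB2 : B2.Finite)
    (h : mexS B1 = mexS B2) :
    mexS (colonS A B1) = mexS (colonS A B2) := by
  rw [mexS_colonS A B1 hA hB1, mexS_colonS A B2 hA hB2, h]
end

section
/- For finite sets A, B ⊆ ℕ, mex((A + b) : B) = a + b, where a = mex A, b = mex B, A + b = {x + b | x ∈ A}, and the colon operation A' : B is defined as A' ∪ {x_i | i ∈ B} with x_0 < x_1 < ⋯ the increasing enumeration of ℕ \ A'. -/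
lemma mexS_eq_of (S : Set ℕ) (m : ℕ) (h1 : m ∉ S) (h2 : ∀ k < m, k ∈ S) :
    mexS S = m := by
  apply le_antisymm
  · exact Nat.sInf_le h1
  · by_contra h
    push_neg at h
    have hne : {n | n ∉ S}.Nonempty := ⟨m, h1⟩
    have hmem := Nat.sInf_mem hne
    exact hmem (h2 _ h)

lemma mem_of_lt_mexS (S : Set ℕ) (k : ℕ) (hk : k < mexS S) : k ∈ S := by
  by_contra hkS
  exact absurd (Nat.sInf_le (show k ∈ {n | n ∉ S} from hkS)) (Nat.not_le.mpr hk)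

lemma mexS_not_mem (S : Set ℕ) (hS : S.Finite) : mexS S ∉ S := by
  have hne : {n | n ∉ S}.Nonempty := by
    have := hS.infinite_compl
    obtain ⟨x, hx⟩ := this.nonempty
    exact ⟨x, hx⟩
  exact Nat.sInf_mem hne

theorem stmt1 (A B : Set ℕ) (hA : A.Finite) (hB : B.Finite) :
    mexS (colonS (addS A (mexS B)) B) = mexS A + mexS B := by
  classical
  set a := mexS A with ha
  set b := mexS B with hb
  set A' := addS A b with hA'def
  set p : ℕ → Prop := fun n => n ∉ A' with hp
  have hA'fin : A'.Finite := hA.image _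
  have hpinf : (setOf p).Infinite := by
    have := hA'fin.infinite_compl
    exact this
  have hmemA' : ∀ n, n ∈ A' ↔ ∃ x ∈ A, x + b = n := by
    intro n; simp [hA'def, addS]
  have hanotA : a ∉ A := mexS_not_mem A hA
  have hbnotB : b ∉ B := mexS_not_mem B hB
  have hplt : ∀ n < b, p n := by
    intro n hn hmem
    obtain ⟨x, hx, hxe⟩ := (hmemA' n).1 hmem
    omega
  have hcount1 : ∀ n ≤ b, Nat.count p n = n := by
    intro n
    induction n with
    | zero => simp
    | succ n ih =>
      intro h
      rw [Nat.count_succ, ih (by omega), if_pos (hplt n (by omega))]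
  have hcount2 : ∀ m ≤ a, Nat.count p (b + m) = b := by
    intro m
    induction m with
    | zero => intro _; simpa using hcount1 b le_rfl
    | succ m ih =>
      intro h
      have hmA : m ∈ A := mem_of_lt_mexS A m (by omega)
      have hnp : ¬ p (b + m) := by
        intro hpn
        exact hpn ((hmemA' (b + m)).2 ⟨m, hmA, by omega⟩)
      rw [show b + (m + 1) = (b + m) + 1 from rfl, Nat.count_succ, ih (by omega)]
      simp [hnp]
  have hpab : p (a + b) := by
    intro hmem
    obtain ⟨x, hx, hxe⟩ := (hmemA' (a + b)).1 hmem
    have : x = a := by omega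
    exact hanotA (this ▸ hx)
  have hnthb : Nat.nth p b = a + b := by
    have h := Nat.nth_count (p := p) hpab
    have h2 : Nat.count p (a + b) = b := by rw [Nat.add_comm]; exact hcount2 a le_rfl
    rwa [h2] at h
  have hnthlt : ∀ k < b, Nat.nth p k = k := by
    intro k hk
    have h := Nat.nth_count (p := p) (hplt k hk)
    rwa [hcount1 k hk.le] at h
  apply mexS_eq_of
  · intro hmem
    rcases hmem with hmem | ⟨i, hiB, hie⟩
    · exact hpab hmem
    · have : Nat.nth p i = Nat.nth p b := by
        rw [hnthb]; exact hie
      have : i = b := Nat.nth_injective hpinf this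
      exact hbnotB (this ▸ hiB)
  · intro k hk
    rcases lt_or_ge k b with hkb | hkb
    · right
      exact ⟨k, mem_of_lt_mexS B k hkb, by simpa using hnthlt k hkb⟩
    · left
      have : k - b ∈ A := mem_of_lt_mexS A (k - b) (by omega)
      exact (hmemA' k).2 ⟨k - b, this, by omega⟩
end

section
/- For all impartial games G, H, Ĥ, J, Ĵ, the ordinal sum with substitution satisfies the associativity-type identity (G :_{Ĥ} H) :_{Ĵ} J ≅ G :_{Ĥ :_{Ĵ} Ĵ} (H :_{Ĵ} J). -/
lemma osub_assoc (f : ZFSet → ZFSet → ZFSet → ZFSet) (hf : IsOSub f) :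
    ∀ G H Hh J Jh : ZFSet,
      f (f G H Hh) J Jh = f G (f H J Jh) (f Hh Jh Jh) := by
  intro G
  induction G using ZFSet.inductionOn with
  | _ G ihG =>
  intro H
  induction H using ZFSet.inductionOn with
  | _ H ihH =>
  intro Hh J
  induction J using ZFSet.inductionOn generalizing Hh with
  | _ J ihJ =>
  intro Jh
  ext x
  unfold IsOSub at hf
  simp only [hf]
  constructor
  · rintro (⟨K, ⟨G', hG', rfl⟩ | ⟨H', hH', rfl⟩, rfl⟩ | ⟨J', hJ', rfl⟩)
    · exact Or.inl ⟨G', hG', ihG G' hG' Hh Hh Jh Jh⟩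
    · exact Or.inr ⟨f H' Jh Jh, Or.inl ⟨H', hH', rfl⟩, ihH H' hH' Hh Jh Jh⟩
    · exact Or.inr ⟨f H J' Jh, Or.inr ⟨J', hJ', rfl⟩, ihJ J' hJ' Hh Jh⟩
  · rintro (⟨G', hG', rfl⟩ | ⟨K, ⟨H', hH', rfl⟩ | ⟨J', hJ', rfl⟩, rfl⟩)
    · exact Or.inl ⟨f G' Hh Hh, Or.inl ⟨G', hG', rfl⟩, (ihG G' hG' Hh Hh Jh Jh).symm⟩
    · exact Or.inl ⟨f G H' Hh, Or.inr ⟨H', hH', rfl⟩, (ihH H' hH' Hh Jh Jh).symm⟩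
    · exact Or.inr ⟨J', hJ', (ihJ J' hJ' Hh Jh).symm⟩

theorem stmt5 (f : ZFSet → ZFSet → ZFSet → ZFSet) (hf : IsOSub f)
    (G H Hh J Jh : ZFSet) (hG : IsGame G) (hH : IsGame H) (hHh : IsGame Hh)
    (hJ : IsGame J) (hJh : IsGame Jh) :
    f (f G H Hh) J Jh = f G (f H J Jh) (f Hh Jh Jh) := osub_assoc f hf G H Hh J Jh
end

section
/- For all impartial games G, H, Ĥ, J, we have (G :_{Ĥ} H) : J ≅ G :_{Ĥ} (H : J), where : denotes the ordinary ordinal sum and :_{Ĥ} denotes the ordinal sum with substitution. -/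
theorem stmt7 (f : ZFSet → ZFSet → ZFSet → ZFSet) (hf : IsOSub f)
    (s : ZFSet → ZFSet → ZFSet) (hs : IsOSum s)
    (G H Hh J : ZFSet) (hG : IsGame G) (hH : IsGame H) (hHh : IsGame Hh) (hJ : IsGame J) :
    s (f G H Hh) J = f G (s H J) Hh := by
  clear hG hH hHh hJ
  induction J using ZFSet.inductionOn with
  | _ J IH =>
    apply ZFSet.ext
    intro x
    rw [hs, hf, hf]
    constructor
    · rintro ((⟨G', hG', rfl⟩ | ⟨H', hH', rfl⟩) | ⟨J', hJ', rfl⟩)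
      · exact Or.inl ⟨G', hG', rfl⟩
      · exact Or.inr ⟨H', (hs H J H').mpr (Or.inl hH'), rfl⟩
      · exact Or.inr ⟨s H J', (hs H J (s H J')).mpr (Or.inr ⟨J', hJ', rfl⟩),
          (IH J' hJ').symm ▸ rfl⟩
    · rintro (⟨G', hG', rfl⟩ | ⟨y, hy, rfl⟩)
      · exact Or.inl (Or.inl ⟨G', hG', rfl⟩)
      · rcases (hs H J y).mp hy with hyH | ⟨J', hJ', rfl⟩
        · exact Or.inl (Or.inr ⟨y, hyH, rfl⟩)
        · exact Or.inr ⟨J', hJ', (IH J' hJ').symm⟩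
end

section
/- For all impartial games G, H, Ĥ, we have G :_{Ĥ} H ≅ (G :_{Ĥ} ∅) : H, i.e., any ordinal sum with substitution can be decomposed as an ordinary ordinal sum whose left component is G :_{Ĥ} ∅. -/
theorem stmt8_aux (f : ZFSet → ZFSet → ZFSet → ZFSet) (hf : IsOSub f)
    (s : ZFSet → ZFSet → ZFSet) (hs : IsOSum s) :
    ∀ H G Hh : ZFSet, f G H Hh = s (f G ∅ Hh) H := by
  intro H
  induction H using ZFSet.inductionOn with
  | _ H ih =>
    intro G Hh
    apply ZFSet.ext
    intro x
    rw [hf, hs]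
    constructor
    · rintro (⟨G', hG', rfl⟩ | ⟨H', hH', rfl⟩)
      · left
        rw [hf]
        exact Or.inl ⟨G', hG', rfl⟩
      · right
        exact ⟨H', hH', ih H' hH' G Hh⟩
    · rintro (hx | ⟨H', hH', rfl⟩)
      · rw [hf] at hx
        rcases hx with ⟨G', hG', rfl⟩ | ⟨H', hH', _⟩
        · exact Or.inl ⟨G', hG', rfl⟩
        · exact absurd hH' (ZFSet.notMem_empty H')
      · exact Or.inr ⟨H', hH', (ih H' hH' G Hh).symm⟩

theorem stmt8 (f : ZFSet → ZFSet → ZFSet → ZFSet) (hf : IsOSub f)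
    (s : ZFSet → ZFSet → ZFSet) (hs : IsOSum s)
    (G H Hh : ZFSet) (hG : IsGame G) (hH : IsGame H) (hHh : IsGame Hh) :
    f G H Hh = s (f G ∅ Hh) H := stmt8_aux f hf s hs H G Hh
end

section
/- For all impartial games G, H, Ĥ, the ordinal sum with substitution G :_{Ĥ} H is a second-player win (Grundy number 0) if and only if H is a second-player win and (G is a second-player win or Ĥ is a first-player win). Equivalently: 𝒢(G :_{Ĥ} H) = 0 iff 𝒢(H) = 0 and (𝒢(G) = 0 or 𝒢(Ĥ) ≠ 0). -/
theorem ZFSet.mem_toSet (a u : ZFSet) : u ∈ a.toSet ↔ u ∈ a := Iff.rfl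

theorem ZFSet.toSet_injective : Function.Injective ZFSet.toSet := SetLike.coe_injective

lemma mex_zero_iff {A : Set ℕ} (hA : A.Finite) : mexS A = 0 ↔ 0 ∉ A := by
  constructor
  · intro h h0
    have hne : {n | n ∉ A}.Nonempty := hA.infinite_compl.nonempty
    have := Nat.sInf_mem hne
    rw [mexS] at h
    rw [h] at this
    exact this h0
  · intro h
    exact Nat.eq_zero_of_le_zero (Nat.sInf_le h)

lemma gn_finite : ∀ n, (Gn n).toSet.Finite := by
  intro n
  induction n with
  | zero =>
    apply Set.Finite.subset (Set.finite_singleton (∅ : ZFSet))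
    intro x hx
    rw [ZFSet.mem_toSet, Gn, ZFSet.mem_singleton] at hx
    simp [hx]
  | succ n ih =>
    apply Set.Finite.of_finite_image (f := ZFSet.toSet) ?_ (ZFSet.toSet_injective.injOn)
    apply Set.Finite.subset ih.powerset
    rintro s ⟨x, hx, rfl⟩
    rw [ZFSet.mem_toSet, Gn, ZFSet.mem_powerset] at hx
    intro y hy
    rw [ZFSet.mem_toSet] at hy ⊢
    exact hx hy

lemma mem_game {G x : ZFSet} (h : IsGame G) (hx : x ∈ G) :
    IsGame x ∧ birthday x < birthday G := by
  have hmem : G ∈ Gn (birthday G) := Nat.sInf_mem h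
  rcases hb : birthday G with _ | k
  · rw [hb, Gn, ZFSet.mem_singleton] at hmem
    subst hmem; exact absurd hx (ZFSet.notMem_empty x)
  · rw [hb, Gn, ZFSet.mem_powerset] at hmem
    have hxk : x ∈ Gn k := hmem hx
    refine ⟨⟨k, hxk⟩, ?_⟩
    exact lt_of_le_of_lt (Nat.sInf_le hxk) (Nat.lt_succ_self k)

lemma game_finite {G : ZFSet} (h : IsGame G) : G.toSet.Finite := by
  obtain ⟨n, hn⟩ := h
  cases n with
  | zero =>
    rw [Gn, ZFSet.mem_singleton] at hn
    subst hn
    exact Set.Finite.subset (Set.finite_empty) (by intro x hx; rw [ZFSet.mem_toSet] at hx; exact (ZFSet.notMem_empty x hx))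
  | succ n =>
    rw [Gn, ZFSet.mem_powerset] at hn
    apply (gn_finite n).subset
    intro x hx
    rw [ZFSet.mem_toSet] at hx ⊢
    exact hn hx

lemma grundy_zero_iff {g : ZFSet → ℕ} (hg : IsGrundy g) {G : ZFSet} (h : IsGame G) :
    g G = 0 ↔ ∀ x ∈ G, g x ≠ 0 := by
  have hfin : {n | ∃ x ∈ G, g x = n}.Finite := by
    have : {n | ∃ x ∈ G, g x = n} = g '' G.toSet := by
      ext n; simp [ZFSet.mem_toSet, eq_comm]
    rw [this]
    exact (game_finite h).image g
  rw [hg G, mex_zero_iff hfin]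
  simp

lemma key (f : ZFSet → ZFSet → ZFSet → ZFSet) (hf : IsOSub f)
    (g : ZFSet → ℕ) (hg : IsGrundy g) :
    ∀ a b : ℕ, ∀ G H Hh : ZFSet, IsGame G → IsGame H → IsGame Hh →
      birthday G ≤ a → birthday H ≤ b →
      (g (f G H Hh) = 0 ↔ g H = 0 ∧ (g G = 0 ∨ g Hh ≠ 0)) := by
  intro a
  induction a using Nat.strong_induction_on with
  | _ a iha =>
  intro b
  induction b using Nat.strong_induction_on with
  | _ b ihb =>
  intro G H Hh hG hH hHh hGa hHb
  have hKfin : {n | ∃ x ∈ f G H Hh, g x = n}.Finite := by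
    apply Set.Finite.subset
      (((game_finite hG).image (fun G' => g (f G' Hh Hh))).union
        ((game_finite hH).image (fun H' => g (f G H' Hh))))
    rintro n ⟨x, hx, rfl⟩
    rw [hf] at hx
    rcases hx with ⟨G', hG', rfl⟩ | ⟨H', hH', rfl⟩
    · exact Or.inl ⟨G', (ZFSet.mem_toSet _ _).2 hG', rfl⟩
    · exact Or.inr ⟨H', (ZFSet.mem_toSet _ _).2 hH', rfl⟩
  have h1 : g (f G H Hh) = 0 ↔ ∀ x ∈ f G H Hh, g x ≠ 0 := by
    rw [hg (f G H Hh), mex_zero_iff hKfin]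
    simp
  have h2 : (∀ x ∈ f G H Hh, g x ≠ 0) ↔
      (∀ G' ∈ G, g (f G' Hh Hh) ≠ 0) ∧ (∀ H' ∈ H, g (f G H' Hh) ≠ 0) := by
    constructor
    · intro h
      constructor
      · intro G' hG'
        exact h _ ((hf G H Hh _).2 (Or.inl ⟨G', hG', rfl⟩))
      · intro H' hH'
        exact h _ ((hf G H Hh _).2 (Or.inr ⟨H', hH', rfl⟩))
    · rintro ⟨h₁, h₂⟩ x hx
      rw [hf] at hx
      rcases hx with ⟨G', hG', rfl⟩ | ⟨H', hH', rfl⟩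
      · exact h₁ _ hG'
      · exact h₂ _ hH'
  have hih1 : ∀ G' ∈ G, (g (f G' Hh Hh) = 0 ↔ g Hh = 0 ∧ (g G' = 0 ∨ g Hh ≠ 0)) := by
    intro G' hG'
    obtain ⟨hg', hb'⟩ := mem_game hG hG'
    exact iha (birthday G') (lt_of_lt_of_le hb' hGa) (birthday Hh) G' Hh Hh hg' hHh hHh
      le_rfl le_rfl
  have hih2 : ∀ H' ∈ H, (g (f G H' Hh) = 0 ↔ g H' = 0 ∧ (g G = 0 ∨ g Hh ≠ 0)) := by
    intro H' hH'
    obtain ⟨hg', hb'⟩ := mem_game hH hH'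
    exact ihb (birthday H') (lt_of_lt_of_le hb' hHb) G H' Hh hG hg' hHh hGa le_rfl
  rw [h1, h2]
  have hPG := grundy_zero_iff hg hG
  have hPH := grundy_zero_iff hg hH
  constructor
  · rintro ⟨c1, c2⟩
    have hside : g G = 0 ∨ g Hh ≠ 0 := by
      by_cases hQ : g Hh = 0
      · left
        rw [hPG]
        intro G' hG' h0
        exact c1 G' hG' ((hih1 G' hG').2 ⟨hQ, Or.inl h0⟩)
      · exact Or.inr hQ
    refine ⟨?_, hside⟩
    rw [hPH]
    intro H' hH' h0
    exact c2 H' hH' ((hih2 H' hH').2 ⟨h0, hside⟩)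
  · rintro ⟨hH0, hside⟩
    constructor
    · intro G' hG' h0
      obtain ⟨hQ, hrest⟩ := (hih1 G' hG').1 h0
      rcases hrest with h | h
      · rcases hside with hGG | hQ'
        · exact (hPG.1 hGG) G' hG' h
        · exact hQ' hQ
      · exact h hQ
    · intro H' hH' h0
      obtain ⟨hH'0, _⟩ := (hih2 H' hH').1 h0
      exact (hPH.1 hH0) H' hH' hH'0

theorem stmt10 (f : ZFSet → ZFSet → ZFSet → ZFSet) (hf : IsOSub f)
    (g : ZFSet → ℕ) (hg : IsGrundy g)
    (G H Hh : ZFSet) (hG : IsGame G) (hH : IsGame H) (hHh : IsGame Hh) :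
    g (f G H Hh) = 0 ↔ g H = 0 ∧ (g G = 0 ∨ g Hh ≠ 0) := by
  exact key f hf g hg (birthday G) (birthday H) G H Hh hG hH hHh le_rfl le_rfl
end

section
/- For all natural numbers a, b, b̂, the Grundy number of the ordinal sum with substitution of nimbers satisfies 𝒢(*a :_{*b̂} *b) = a + b if b ≥ b̂, and 𝒢(*a :_{*b̂} *b) = b if b < b̂. -/
lemma mem_nim {x : ZFSet} {n : ℕ} : x ∈ nim n ↔ ∃ m, m < n ∧ x = nim m := by
  induction n with
  | zero => simp [nim]
  | succ n ih =>
    simp only [nim, ZFSet.mem_insert_iff, ih]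
    constructor
    · rintro (rfl | ⟨m, hm, rfl⟩)
      · exact ⟨n, by omega, rfl⟩
      · exact ⟨m, by omega, rfl⟩
    · rintro ⟨m, hm, rfl⟩
      rcases Nat.lt_succ_iff_lt_or_eq.1 hm with h | rfl
      · exact Or.inr ⟨m, h, rfl⟩
      · exact Or.inl rfl

lemma mexS_eq {A : Set ℕ} {t : ℕ} (h1 : t ∉ A) (h2 : ∀ n < t, n ∈ A) : mexS A = t := by
  unfold mexS
  refine le_antisymm (Nat.sInf_le h1) (le_csInf ⟨t, h1⟩ ?_)
  intro m hm
  by_contra h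
  push_neg at h
  exact hm (h2 m h)

lemma key_s13 (f : ZFSet → ZFSet → ZFSet → ZFSet) (hf : IsOSub f)
    (g : ZFSet → ℕ) (hg : IsGrundy g) :
    ∀ a b bh : ℕ, g (f (nim a) (nim b) (nim bh)) = if bh ≤ b then a + b else b := by
  intro a
  induction a using Nat.strong_induction_on with
  | _ a IHa =>
    intro b
    induction b using Nat.strong_induction_on with
    | _ b IHb =>
      intro bh
      rw [hg]
      have hS : {n | ∃ x ∈ f (nim a) (nim b) (nim bh), g x = n} =
          {n | (∃ a' < a, n = a' + bh) ∨ (∃ b' < b, n = if bh ≤ b' then a + b' else b')} := by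
        ext n
        simp only [Set.mem_setOf_eq]
        constructor
        · rintro ⟨x, hx, rfl⟩
          rw [hf] at hx
          rcases hx with ⟨G', hG', rfl⟩ | ⟨H', hH', rfl⟩
          · rw [mem_nim] at hG'
            obtain ⟨a', ha', rfl⟩ := hG'
            exact Or.inl ⟨a', ha', by rw [IHa a' ha' bh bh]; simp⟩
          · rw [mem_nim] at hH'
            obtain ⟨b', hb', rfl⟩ := hH'
            exact Or.inr ⟨b', hb', IHb b' hb' bh⟩
        · rintro (⟨a', ha', rfl⟩ | ⟨b', hb', rfl⟩)
          · refine ⟨f (nim a') (nim bh) (nim bh), ?_, ?_⟩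
            · rw [hf]
              exact Or.inl ⟨nim a', mem_nim.2 ⟨a', ha', rfl⟩, rfl⟩
            · rw [IHa a' ha' bh bh]; simp
          · refine ⟨f (nim a) (nim b') (nim bh), ?_, ?_⟩
            · rw [hf]
              exact Or.inr ⟨nim b', mem_nim.2 ⟨b', hb', rfl⟩, rfl⟩
            · exact IHb b' hb' bh
      rw [hS]
      by_cases hb : bh ≤ b
      · rw [if_pos hb]
        apply mexS_eq
        · rintro (⟨a', ha', h⟩ | ⟨b', hb', h⟩)
          · omega
          · split at h <;> omega
        · intro n hn
          simp only [Set.mem_setOf_eq]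
          by_cases h1 : n < bh
          · exact Or.inr ⟨n, by omega, by rw [if_neg (by omega)]⟩
          · by_cases h2 : n < a + bh
            · exact Or.inl ⟨n - bh, by omega, by omega⟩
            · exact Or.inr ⟨n - a, by omega, by rw [if_pos (by omega)]; omega⟩
      · rw [if_neg hb]
        apply mexS_eq
        · rintro (⟨a', ha', h⟩ | ⟨b', hb', h⟩)
          · omega
          · split at h <;> omega
        · intro n hn
          exact Or.inr ⟨n, by omega, by rw [if_neg (by omega)]⟩

theorem stmt13 (f : ZFSet → ZFSet → ZFSet → ZFSet) (hf : IsOSub f)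
    (g : ZFSet → ℕ) (hg : IsGrundy g) (a b bh : ℕ) :
    g (f (nim a) (nim b) (nim bh)) = if bh ≤ b then a + b else b := key_s13 f hf g hg a b bh
end

section
/- Let n ≥ 1 and let a_0, …, a_n and â_1, …, â_n be natural numbers. Let p be the largest p' ∈ {1, …, n} with ∑_{i=p'}^n (a_i − â_i) < 0 (as integers), and p := 0 if no such p' exists. Then the Grundy number of the left-associated chain *a_0 :_{*â_1} *a_1 :_{*â_2} ⋯ :_{*â_n} *a_n equals ∑_{i=p}^n a_i. -/
namespace Stmt14
open Finset

variable (ah : ℕ → ℕ) (k : ℕ)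

/-- integer suffix sum of `b` over `[q,k]`. -/
def Bz (b : ℕ → ℕ) (q : ℕ) : ℤ := ∑ i ∈ Finset.Ico q (k+1), (b i : ℤ)

/-- integer suffix sum of `ah` over `[q,k]`. -/
def Az (q : ℕ) : ℤ := ∑ i ∈ Finset.Ico q (k+1), (ah i : ℤ)

/-- `σ_q = ∑_{i=q}^k (b i - ah i)`. -/
def sg (b : ℕ → ℕ) (q : ℕ) : ℤ := ∑ i ∈ Finset.Ico q (k+1), ((b i : ℤ) - (ah i : ℤ))

noncomputable def pp (b : ℕ → ℕ) : ℕ :=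
  Nat.findGreatest (fun q => 0 < q ∧ sg ah k b q < 0) k

noncomputable def Fv (b : ℕ → ℕ) : ℕ := ∑ i ∈ Finset.Ico (pp ah k b) (k+1), b i

/-- the moved sequence. -/
def mv (b : ℕ → ℕ) (j c : ℕ) : ℕ → ℕ :=
  fun i => if i < j then b i else if i = j then c else ah i

variable {ah k}

lemma sg_eq (b q) : sg ah k b q = Bz k b q - Az ah k q := by
  simp [sg, Bz, Az, Finset.sum_sub_distrib]

lemma sg_top (b) : sg ah k b (k+1) = 0 := by simp [sg]

lemma Bz_nonneg (b q) : 0 ≤ Bz k b q := Finset.sum_nonneg fun i _ => by positivity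

lemma Bz_antitone (b) {q q'} (h : q ≤ q') : Bz k b q' ≤ Bz k b q := by
  apply Finset.sum_le_sum_of_subset_of_nonneg
  · exact Finset.Ico_subset_Ico h le_rfl
  · intro i _ _; positivity

lemma Az_antitone {q q'} (h : q ≤ q') : Az ah k q' ≤ Az ah k q := by
  apply Finset.sum_le_sum_of_subset_of_nonneg
  · exact Finset.Ico_subset_Ico h le_rfl
  · intro i _ _; positivity

lemma Bz_split (b) {q j} (hq : q ≤ j) (hj : j ≤ k+1) :
    Bz k b q = (∑ i ∈ Finset.Ico q j, (b i : ℤ)) + Bz k b j := by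
  rw [Bz, Bz, ← Finset.sum_Ico_consecutive _ hq hj]

lemma Bz_succ (b) {j} (hj : j ≤ k) : Bz k b j = (b j : ℤ) + Bz k b (j+1) := by
  rw [Bz, Bz, Finset.sum_eq_sum_Ico_succ_bot (by omega)]

lemma Az_eq (b q) : Az ah k q = Bz k b q - sg ah k b q := by rw [sg_eq]; ring

lemma pp_le (b) : pp ah k b ≤ k := Nat.findGreatest_le k

lemma sg_pp_neg (b) (h : 0 < pp ah k b) : sg ah k b (pp ah k b) < 0 :=
  ((Nat.findGreatest_eq_iff.1 (rfl : pp ah k b = _)).2.1 (by omega)).2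

lemma sg_nonneg_of_gt (b) {q} (h : pp ah k b < q) : 0 ≤ sg ah k b q := by
  rcases le_or_gt q k with hq | hq
  · by_contra hneg
    exact (Nat.findGreatest_eq_iff.1 (rfl : pp ah k b = _)).2.2 h hq ⟨by omega, by omega⟩
  · have : Finset.Ico q (k+1) = ∅ := by rw [Finset.Ico_eq_empty_iff]; omega
    simp [sg, this]

lemma Fv_cast (b) : (Fv ah k b : ℤ) = Bz k b (pp ah k b) := by
  simp [Fv, Bz]

end Stmt14

namespace Stmt14
open Finset

variable {ah : ℕ → ℕ} {k : ℕ}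

/-- shift of sigma under a move, for `q ≤ j`. -/
lemma sg_mv_le (b : ℕ → ℕ) {j : ℕ} (c : ℕ) (hj : j ≤ k) {q : ℕ} (hq : q ≤ j) :
    sg ah k (mv ah b j c) q = sg ah k b q + ((c : ℤ) - (b j : ℤ) - sg ah k b (j+1)) := by
  have hsplit : ∀ b' : ℕ → ℕ, sg ah k b' q =
      (∑ i ∈ Finset.Ico q j, ((b' i : ℤ) - (ah i : ℤ))) + ((b' j : ℤ) - (ah j : ℤ))
        + sg ah k b' (j+1) := by
    intro b'
    rw [sg, sg, ← Finset.sum_Ico_consecutive (fun i => ((b' i : ℤ) - (ah i : ℤ))) hq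
      (show j ≤ k+1 by omega),
      Finset.sum_eq_sum_Ico_succ_bot (show j < k+1 by omega)]
    ring
  have h1 : ∑ i ∈ Finset.Ico q j, (((mv ah b j c) i : ℤ) - (ah i : ℤ))
      = ∑ i ∈ Finset.Ico q j, ((b i : ℤ) - (ah i : ℤ)) := by
    apply Finset.sum_congr rfl
    intro i hi
    have : i < j := (Finset.mem_Ico.1 hi).2
    simp [mv, this]
  have h2 : ((mv ah b j c) j : ℤ) = (c : ℤ) := by simp [mv]
  have h3 : sg ah k (mv ah b j c) (j+1) = 0 := by
    rw [sg]
    apply Finset.sum_eq_zero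
    intro i hi
    have : j < i := by have := (Finset.mem_Ico.1 hi).1; omega
    have : (mv ah b j c) i = ah i := by
      have h1 : ¬ i < j := by omega
      have h2 : i ≠ j := by omega
      simp [mv, h1, h2]
    simp [this]
  rw [hsplit (mv ah b j c), hsplit b, h1, h2, h3]
  ring

lemma sg_mv_gt (b : ℕ → ℕ) {j : ℕ} (c : ℕ) {q : ℕ} (hq : j < q) :
    sg ah k (mv ah b j c) q = 0 := by
  rw [sg]
  apply Finset.sum_eq_zero
  intro i hi
  have : j < i := by have := (Finset.mem_Ico.1 hi).1; omega
  have : (mv ah b j c) i = ah i := by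
    have h1 : ¬ i < j := by omega
    have h2 : i ≠ j := by omega
    simp [mv, h1, h2]
  simp [this]

/-- p of the moved position. -/
lemma pp_mv (b : ℕ → ℕ) {j : ℕ} (c : ℕ) (hj : j ≤ k) :
    pp ah k (mv ah b j c) =
      Nat.findGreatest
        (fun q => 0 < q ∧ sg ah k b q + ((c : ℤ) - (b j : ℤ) - sg ah k b (j+1)) < 0) j := by
  classical
  set δ : ℤ := (c : ℤ) - (b j : ℤ) - sg ah k b (j+1) with hδ
  set π := Nat.findGreatest (fun q => 0 < q ∧ sg ah k b q + δ < 0) j with hπ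
  have hπle : π ≤ j := Nat.findGreatest_le j
  have hπspec := Nat.findGreatest_eq_iff.1 hπ.symm
  rw [pp, Nat.findGreatest_eq_iff]
  refine ⟨by omega, ?_, ?_⟩
  · intro hne
    have := hπspec.2.1 hne
    exact ⟨this.1, by rw [sg_mv_le b c hj hπle]; omega⟩
  · intro i hi hik ⟨hi0, hneg⟩
    rcases le_or_gt i j with h | h
    · rw [sg_mv_le b c hj h] at hneg
      exact hπspec.2.2 hi h ⟨hi0, hneg⟩
    · rw [sg_mv_gt b c h] at hneg; omega

lemma pp_mv_le (b : ℕ → ℕ) {j : ℕ} (c : ℕ) (hj : j ≤ k) :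
    pp ah k (mv ah b j c) ≤ j := by
  rw [pp_mv b c hj]; exact Nat.findGreatest_le j

/-- Grundy value of the moved position. -/
lemma Fv_mv (b : ℕ → ℕ) {j : ℕ} (c : ℕ) (hj : j ≤ k) :
    (Fv ah k (mv ah b j c) : ℤ) =
      Bz k b (pp ah k (mv ah b j c)) + ((c : ℤ) - (b j : ℤ) - sg ah k b (j+1)) := by
  set π := pp ah k (mv ah b j c) with hπ
  have hπle : π ≤ j := pp_mv_le b c hj
  have : (Fv ah k (mv ah b j c) : ℤ) = Bz k (mv ah b j c) π := Fv_cast _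
  rw [this, Bz_split (mv ah b j c) hπle (by omega : j ≤ k+1),
      Bz_succ (mv ah b j c) hj]
  have h1 : ∑ i ∈ Finset.Ico π j, ((mv ah b j c) i : ℤ)
      = ∑ i ∈ Finset.Ico π j, (b i : ℤ) := by
    apply Finset.sum_congr rfl
    intro i hi
    have : i < j := (Finset.mem_Ico.1 hi).2
    simp [mv, this]
  have h2 : ((mv ah b j c) j : ℤ) = (c : ℤ) := by simp [mv]
  have h3 : Bz k (mv ah b j c) (j+1) = Az ah k (j+1) := by
    rw [Bz, Az]
    apply Finset.sum_congr rfl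
    intro i hi
    have : j < i := by have := (Finset.mem_Ico.1 hi).1; omega
    have : (mv ah b j c) i = ah i := by
      have h1 : ¬ i < j := by omega
      have h2 : i ≠ j := by omega
      simp [mv, h1, h2]
    rw [this]
  rw [h1, h2, h3, Az_eq b (j+1), Bz_split b hπle (by omega : j ≤ k+1), Bz_succ b hj]
  ring

end Stmt14

namespace Stmt14
open Finset

variable {ah : ℕ → ℕ} {k : ℕ}

lemma Fv_mv_ne (b : ℕ → ℕ) {j c : ℕ} (hj : j ≤ k) (hc : c < b j) :
    Fv ah k (mv ah b j c) ≠ Fv ah k b := by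
  classical
  set p := pp ah k b with hpdef
  set π := pp ah k (mv ah b j c) with hπdef
  have hπle : π ≤ j := pp_mv_le b c hj
  have hval := Fv_mv (ah := ah) b c hj
  rw [← hπdef] at hval
  have hFb : (Fv ah k b : ℤ) = Bz k b p := Fv_cast b
  intro heq
  have heqz : (Fv ah k (mv ah b j c) : ℤ) = (Fv ah k b : ℤ) := by exact_mod_cast heq
  rcases lt_or_ge j p with hjp | hpj
  · -- j < p : value is strictly larger
    have hp1 : 0 < p := by omega
    have hsgp : sg ah k b p < 0 := sg_pp_neg b hp1
    have h1 : Bz k b j ≤ Bz k b π := Bz_antitone b hπle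
    have h2 : Bz k b j = (b j : ℤ) + Bz k b (j+1) := Bz_succ b (by omega)
    have h3 : Az ah k p ≤ Az ah k (j+1) := Az_antitone (by omega)
    have h4 : Az ah k (j+1) = Bz k b (j+1) - sg ah k b (j+1) := Az_eq b (j+1)
    have h5 : Az ah k p = Bz k b p - sg ah k b p := Az_eq b p
    have hc0 : (0:ℤ) ≤ c := by positivity
    -- value = Bz π + c - b j - sg (j+1) ≥ Az (j+1) ≥ Az p > Bz p = Fv b
    omega
  · -- p ≤ j : value is strictly smaller
    have hsgj1 : 0 ≤ sg ah k b (j+1) := sg_nonneg_of_gt b (by omega)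
    have hcb : (c : ℤ) < (b j : ℤ) := by exact_mod_cast hc
    have hπp : p ≤ π := by
      rcases Nat.eq_zero_or_pos p with h0 | hp1
      · omega
      · have hsgp : sg ah k b p < 0 := sg_pp_neg b hp1
        rw [hπdef, pp_mv b c hj]
        exact Nat.le_findGreatest hpj ⟨hp1, by omega⟩
    have h1 : Bz k b π ≤ Bz k b p := Bz_antitone b hπp
    omega

lemma Fv_mv_cover (b : ℕ → ℕ) {m : ℕ} (hm : m < Fv ah k b) :
    ∃ j, j ≤ k ∧ ∃ c, c < b j ∧ Fv ah k (mv ah b j c) = m := by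
  classical
  set p := pp ah k b with hpdef
  have hFb : (Fv ah k b : ℤ) = Bz k b p := Fv_cast b
  have hmz : (m : ℤ) < Bz k b p := by rw [← hFb]; exact_mod_cast hm
  -- q := least index with Az (q+1) ≤ m
  have hex : ∃ q, Az ah k (q+1) ≤ (m : ℤ) := by
    refine ⟨k, ?_⟩
    have : Finset.Ico (k+1) (k+1) = ∅ := by simp
    rw [Az, this]
    simp
  set q := Nat.find hex with hqdef
  have hq : Az ah k (q+1) ≤ (m : ℤ) := Nat.find_spec hex
  have hqmin : ∀ q', q' < q → (m : ℤ) < Az ah k (q'+1) := by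
    intro q' hq'
    have := Nat.find_min hex hq'
    omega
  have hqk : q ≤ k := Nat.find_min' hex (by
    have : Finset.Ico (k+1) (k+1) = ∅ := by simp
    rw [Az, this]; simp)
  have hpq : p ≤ q := by
    by_contra hcon
    push_neg at hcon  -- q < p
    have hp1 : 0 < p := by omega
    have hsgp : sg ah k b p < 0 := sg_pp_neg b hp1
    have h1 : Az ah k p ≤ Az ah k (q+1) := Az_antitone (by omega)
    have h2 : Az ah k p = Bz k b p - sg ah k b p := Az_eq b p
    omega
  -- e := Bz q - m ≥ 1
  set e : ℤ := Bz k b q - m with hedef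
  have he1 : 1 ≤ e := by
    rcases Nat.eq_zero_or_pos q with h0 | hq1
    · -- q = 0 → p = 0
      have hp0 : p = 0 := by omega
      rw [hp0] at hmz
      rw [hedef, h0]
      omega
    · rcases lt_or_ge (sg ah k b q) 0 with hneg | hnn
      · -- q ≤ p, hence q = p
        have hqp : q ≤ p := Nat.le_findGreatest hqk ⟨hq1, hneg⟩
        have : q = p := by omega
        rw [hedef, this]
        omega
      · have h1 : (m : ℤ) < Az ah k q := by
          have := hqmin (q-1) (by omega)
          have hq1' : q - 1 + 1 = q := by omega
          rwa [hq1'] at this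
        have h2 : Az ah k q = Bz k b q - sg ah k b q := Az_eq b q
        omega
  -- J := largest J' ≤ k such that all σ_{q''} for q'' ∈ (q, J'] are ≥ e
  set P : ℕ → Prop := fun J' => ∀ q'', q < q'' → q'' ≤ J' → e ≤ sg ah k b q'' with hPdef
  have : DecidablePred P := Classical.decPred _
  set J := Nat.findGreatest P k with hJdef
  have hJk : J ≤ k := Nat.findGreatest_le k
  have hqJ : q ≤ J := Nat.le_findGreatest hqk (fun q'' h1 h2 => by omega)
  have hJspec := Nat.findGreatest_eq_iff.1 hJdef.symm
  have hJprop : P J := by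
    rcases Nat.eq_zero_or_pos J with h0 | hJ1
    · intro q'' h1 h2; omega
    · exact hJspec.2.1 (by omega)
  have hsgJ1 : sg ah k b (J+1) < e := by
    rcases eq_or_lt_of_le hJk with heq | hlt
    · rw [heq, sg_top]; omega
    · have hnp : ¬ P (J+1) := hJspec.2.2 (by omega) (by omega)
      have hnp' : ∃ q'', q < q'' ∧ q'' ≤ J + 1 ∧ sg ah k b q'' < e := by
        by_contra hno
        push_neg at hno
        exact hnp fun q'' h1 h2 => hno q'' h1 h2
      obtain ⟨q'', h1, h2, h3⟩ := hnp'
      rcases eq_or_lt_of_le h2 with he2 | hlt2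
      · rwa [he2] at h3
      · exact absurd (hJprop q'' h1 (by omega)) (by omega)
  -- c
  have hc0 : 0 ≤ (b J : ℤ) + sg ah k b (J+1) - e := by
    rcases eq_or_lt_of_le hqJ with heq | hlt
    · -- J = q: use Az (q+1) ≤ m
      have h1 : Az ah k (q+1) = Bz k b (q+1) - sg ah k b (q+1) := Az_eq b (q+1)
      have h2 : Bz k b q = (b q : ℤ) + Bz k b (q+1) := Bz_succ b hqk
      rw [← heq]
      omega
    · have h3 : e ≤ sg ah k b J := hJprop J hlt le_rfl
      have h4 : sg ah k b J = ((b J : ℤ) - ah J) + sg ah k b (J+1) := by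
        rw [sg, sg, Finset.sum_eq_sum_Ico_succ_bot (show J < k+1 by omega)]
      have h5 : (0:ℤ) ≤ ah J := by positivity
      omega
  set c : ℕ := ((b J : ℤ) + sg ah k b (J+1) - e).toNat with hcdef
  have hcz : (c : ℤ) = (b J : ℤ) + sg ah k b (J+1) - e := Int.toNat_of_nonneg hc0
  have hclt : c < b J := by
    have : (c : ℤ) < (b J : ℤ) := by omega
    exact_mod_cast this
  refine ⟨J, hJk, c, hclt, ?_⟩
  -- δ = -e
  have hδ : (c : ℤ) - (b J : ℤ) - sg ah k b (J+1) = -e := by omega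
  have hπ : pp ah k (mv ah b J c) = q := by
    rw [pp_mv b c hJk, Nat.findGreatest_eq_iff]
    refine ⟨hqJ, ?_, ?_⟩
    · intro hq0
      refine ⟨by omega, ?_⟩
      rw [hδ]
      -- need sg b q < e, i.e. m < Az q
      have h1 : (m : ℤ) < Az ah k q := by
        have := hqmin (q-1) (by omega)
        have hq1' : q - 1 + 1 = q := by omega
        rwa [hq1'] at this
      have h2 : Az ah k q = Bz k b q - sg ah k b q := Az_eq b q
      omega
    · intro i hi hiJ ⟨hi0, hneg⟩
      rw [hδ] at hneg
      have := hJprop i hi hiJ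
      omega
  have hval := Fv_mv (ah := ah) b c hJk
  rw [hπ, hδ] at hval
  have : (Fv ah k (mv ah b J c) : ℤ) = (m : ℤ) := by omega
  exact_mod_cast this

/-- the mex identity. -/
lemma Fv_mex (b : ℕ → ℕ) :
    Fv ah k b = mexS {m | ∃ j, j ≤ k ∧ ∃ c, c < b j ∧ Fv ah k (mv ah b j c) = m} := by
  classical
  set A := {m | ∃ j, j ≤ k ∧ ∃ c, c < b j ∧ Fv ah k (mv ah b j c) = m} with hA
  have hFnot : Fv ah k b ∉ A := by
    rintro ⟨j, hj, c, hc, hval⟩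
    exact Fv_mv_ne b hj hc hval
  have hne : {n | n ∉ A}.Nonempty := ⟨Fv ah k b, hFnot⟩
  have h1 : mexS A ≤ Fv ah k b := Nat.sInf_le hFnot
  have h2 : Fv ah k b ≤ mexS A := by
    by_contra hcon
    push_neg at hcon
    have hmem : mexS A ∈ {n | n ∉ A} := Nat.sInf_mem hne
    obtain ⟨j, hj, c, hc, hval⟩ := Fv_mv_cover b hcon
    exact hmem ⟨j, hj, c, hc, hval⟩
  omega

end Stmt14

namespace Stmt14

lemma nim_mem {x : ZFSet} {m : ℕ} : x ∈ nim m ↔ ∃ c, c < m ∧ x = nim c := by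
  induction m with
  | zero =>
    simp only [nim]
    constructor
    · intro h; exact absurd h (ZFSet.notMem_empty x)
    · rintro ⟨c, hc, _⟩; omega
  | succ m ih =>
    simp only [nim, ZFSet.mem_insert_iff]
    constructor
    · rintro (h | h)
      · exact ⟨m, by omega, h⟩
      · obtain ⟨c, hc, hx⟩ := ih.1 h
        exact ⟨c, by omega, hx⟩
    · rintro ⟨c, hc, hx⟩
      rcases eq_or_lt_of_le (Nat.lt_succ_iff.1 hc) with he | hlt
      · left; rw [hx, he]
      · right; exact ih.2 ⟨c, hlt, hx⟩

lemma chain_congr (f : ZFSet → ZFSet → ZFSet → ZFSet) (Xh : ℕ → ZFSet) :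
    ∀ (k : ℕ) (X X' : ℕ → ZFSet), (∀ i, i ≤ k → X i = X' i) →
      chain f X Xh 0 k = chain f X' Xh 0 k := by
  intro k
  induction k with
  | zero => intro X X' h; simpa [chain] using h 0 le_rfl
  | succ k ih =>
    intro X X' h
    show f (chain f X Xh 0 k) (X (0 + k + 1)) (Xh (0 + k + 1))
      = f (chain f X' Xh 0 k) (X' (0 + k + 1)) (Xh (0 + k + 1))
    rw [ih X X' (fun i hi => h i (by omega)), h (0 + k + 1) (by omega)]

variable {f : ZFSet → ZFSet → ZFSet → ZFSet} (hf : IsOSub f) {ah : ℕ → ℕ}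

lemma chain_mem (hf : IsOSub f) (ah : ℕ → ℕ) :
    ∀ (k : ℕ) (b : ℕ → ℕ) (x : ZFSet),
      x ∈ chain f (fun i => nim (b i)) (fun i => nim (ah i)) 0 k ↔
        ∃ j, j ≤ k ∧ ∃ c, c < b j ∧
          x = chain f (fun i => nim (mv ah b j c i)) (fun i => nim (ah i)) 0 k := by
  intro k
  induction k with
  | zero =>
    intro b x
    show x ∈ nim (b 0) ↔ _
    rw [nim_mem]
    constructor
    · rintro ⟨c, hc, hx⟩
      refine ⟨0, le_rfl, c, hc, ?_⟩
      show x = nim (mv ah b 0 c 0)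
      simpa [mv] using hx
    · rintro ⟨j, hj, c, hc, hx⟩
      have hj0 : j = 0 := by omega
      subst hj0
      refine ⟨c, hc, ?_⟩
      simpa [chain, mv] using hx
  | succ k ih =>
    intro b x
    show x ∈ f (chain f (fun i => nim (b i)) (fun i => nim (ah i)) 0 k)
        (nim (b (0 + k + 1))) (nim (ah (0 + k + 1))) ↔ _
    rw [hf]
    constructor
    · rintro (⟨G', hG', hx⟩ | ⟨H', hH', hx⟩)
      · obtain ⟨j, hj, c, hc, hG⟩ := (ih b G').1 hG'
        refine ⟨j, by omega, c, hc, ?_⟩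
        show x = f (chain f (fun i => nim (mv ah b j c i)) (fun i => nim (ah i)) 0 k)
          (nim (mv ah b j c (0 + k + 1))) (nim (ah (0 + k + 1)))
        have hmv : mv ah b j c (0 + k + 1) = ah (0 + k + 1) := by
          have h1 : ¬ k + 1 < j := by omega
          have h2 : k + 1 ≠ j := by omega
          simp [mv, h1, h2]
        rw [hmv, ← hG, hx]
      · obtain ⟨c, hc, hH⟩ := nim_mem.1 hH'
        refine ⟨k + 1, le_rfl, c, by simpa using hc, ?_⟩
        show x = f (chain f (fun i => nim (mv ah b (k+1) c i)) (fun i => nim (ah i)) 0 k)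
          (nim (mv ah b (k+1) c (0 + k + 1))) (nim (ah (0 + k + 1)))
        have hcongr : chain f (fun i => nim (mv ah b (k+1) c i)) (fun i => nim (ah i)) 0 k
            = chain f (fun i => nim (b i)) (fun i => nim (ah i)) 0 k := by
          apply chain_congr
          intro i hi
          have : i < k + 1 := by omega
          simp [mv, this]
        have hmv : mv ah b (k+1) c (0 + k + 1) = c := by simp [mv]
        rw [hcongr, hmv, hx, hH]
    · rintro ⟨j, hj, c, hc, hx⟩
      rcases Nat.lt_succ_iff_lt_or_eq.1 (Nat.lt_succ_of_le hj) with hjk | hjk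
      · -- j ≤ k : left branch
        left
        have hjk' : j ≤ k := by omega
        refine ⟨chain f (fun i => nim (mv ah b j c i)) (fun i => nim (ah i)) 0 k,
          (ih b _).2 ⟨j, hjk', c, hc, rfl⟩, ?_⟩
        rw [hx]
        show chain f (fun i => nim (mv ah b j c i)) (fun i => nim (ah i)) 0 (k+1) = _
        show f (chain f (fun i => nim (mv ah b j c i)) (fun i => nim (ah i)) 0 k)
          (nim (mv ah b j c (0 + k + 1))) (nim (ah (0 + k + 1))) = _
        have hmv : mv ah b j c (0 + k + 1) = ah (0 + k + 1) := by
          have h1 : ¬ k + 1 < j := by omega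
          have h2 : k + 1 ≠ j := by omega
          simp [mv, h1, h2]
        rw [hmv]
      · -- j = k+1 : right branch
        right
        subst hjk
        refine ⟨nim c, nim_mem.2 ⟨c, by simpa using hc, rfl⟩, ?_⟩
        rw [hx]
        show chain f (fun i => nim (mv ah b (k+1) c i)) (fun i => nim (ah i)) 0 (k+1) = _
        show f (chain f (fun i => nim (mv ah b (k+1) c i)) (fun i => nim (ah i)) 0 k)
          (nim (mv ah b (k+1) c (0 + k + 1))) (nim (ah (0 + k + 1))) = _
        have hcongr : chain f (fun i => nim (mv ah b (k+1) c i)) (fun i => nim (ah i)) 0 k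
            = chain f (fun i => nim (b i)) (fun i => nim (ah i)) 0 k := by
          apply chain_congr
          intro i hi
          have : i < k + 1 := by omega
          simp [mv, this]
        have hmv : mv ah b (k+1) c (0 + k + 1) = c := by simp [mv]
        rw [hcongr, hmv]

end Stmt14

namespace Stmt14

lemma grundy_chain {f : ZFSet → ZFSet → ZFSet → ZFSet} (hf : IsOSub f)
    {g : ZFSet → ℕ} (hg : IsGrundy g) (ah : ℕ → ℕ) (k : ℕ) (x : ZFSet) :
    ∀ b : ℕ → ℕ, x = chain f (fun i => nim (b i)) (fun i => nim (ah i)) 0 k →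
      g x = Fv ah k b := by
  induction x using ZFSet.inductionOn with
  | _ x ihx =>
    intro b hxb
    have hG := hg x
    have hset : {n | ∃ y ∈ x, g y = n}
        = {m | ∃ j, j ≤ k ∧ ∃ c, c < b j ∧ Fv ah k (mv ah b j c) = m} := by
      ext m
      constructor
      · rintro ⟨y, hy, hgy⟩
        have hy' := hy
        rw [hxb] at hy'
        obtain ⟨j, hj, c, hc, hyc⟩ := (chain_mem hf ah k b y).1 hy'
        exact ⟨j, hj, c, hc, by rw [← hgy]; exact (ihx y hy (mv ah b j c) hyc).symm⟩
      · rintro ⟨j, hj, c, hc, hFv⟩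
        refine ⟨chain f (fun i => nim (mv ah b j c i)) (fun i => nim (ah i)) 0 k, ?_, ?_⟩
        · rw [hxb]
          exact (chain_mem hf ah k b _).2 ⟨j, hj, c, hc, rfl⟩
        · rw [ihx _ (by rw [hxb]; exact (chain_mem hf ah k b _).2 ⟨j, hj, c, hc, rfl⟩)
            (mv ah b j c) rfl, hFv]
    rw [hG, hset]
    exact (Fv_mex b).symm

end Stmt14


theorem stmt14 (f : ZFSet → ZFSet → ZFSet → ZFSet) (hf : IsOSub f)
    (g : ZFSet → ℕ) (hg : IsGrundy g)
    (n : ℕ) (hn : 1 ≤ n) (a ah : ℕ → ℕ) (p : ℕ)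
    (hp : (p ∈ Finset.Icc 1 n ∧ (∑ i ∈ Finset.Icc p n, ((a i : ℤ) - ah i)) < 0 ∧
            ∀ q ∈ Finset.Icc 1 n, (∑ i ∈ Finset.Icc q n, ((a i : ℤ) - ah i)) < 0 → q ≤ p)
          ∨ (p = 0 ∧ ∀ q ∈ Finset.Icc 1 n, ¬ (∑ i ∈ Finset.Icc q n, ((a i : ℤ) - ah i)) < 0)) :
    g (chain f (fun i => nim (a i)) (fun i => nim (ah i)) 0 n) =
      ∑ i ∈ Finset.Icc p n, a i := by
  classical
  have hsg : ∀ q, Stmt14.sg ah n a q = ∑ i ∈ Finset.Icc q n, ((a i : ℤ) - ah i) := by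
    intro q; rw [Stmt14.sg, Finset.Ico_add_one_right_eq_Icc]
  have hpp : Stmt14.pp ah n a = p := by
    rcases hp with ⟨hp1, hp2, hp3⟩ | ⟨hp0, hp2⟩
    · rw [Finset.mem_Icc] at hp1
      rw [Stmt14.pp, Nat.findGreatest_eq_iff]
      refine ⟨hp1.2, fun _ => ⟨by omega, by rw [hsg]; exact hp2⟩, ?_⟩
      intro i hi hik ⟨hi0, hneg⟩
      rw [hsg] at hneg
      have := hp3 i (Finset.mem_Icc.2 ⟨by omega, hik⟩) hneg
      omega
    · rw [hp0, Stmt14.pp, Nat.findGreatest_eq_zero_iff]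
      intro i hi0 hik hPi
      obtain ⟨_, hneg⟩ := hPi
      rw [hsg] at hneg
      exact hp2 i (Finset.mem_Icc.2 ⟨hi0, hik⟩) hneg
  rw [Stmt14.grundy_chain hf hg ah n _ a rfl, Stmt14.Fv, hpp, Finset.Ico_add_one_right_eq_Icc]
end

section
/- For any n ≥ 1 and impartial games G_0, …, G_n, Ĝ_1, …, Ĝ_n, the left-associated chain of ordinal sums with substitution satisfies G_0 :_{Ĝ₁} G_1 :_{Ĝ₂} ⋯ :_{Ĝₙ} G_n ≅ G_0 :_{(Ĝ₁ :_{Ĝ₂} Ĝ₂ :_{Ĝ₃} ⋯ :_{Ĝₙ} Ĝₙ)} (G_1 :_{Ĝ₂} G_2 :_{Ĝ₃} ⋯ :_{Ĝₙ} G_n), where all chains are parenthesized left-to-right. -/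
theorem key15 (f : ZFSet → ZFSet → ZFSet → ZFSet) (hf : IsOSub f) :
    ∀ G H K Hh Kh, f (f G H Hh) K Kh = f G (f H K Kh) (f Hh Kh Kh) := by
  intro G
  induction G using WellFounded.induction ZFSet.mem_wf with
  | _ G ihG =>
  intro H
  induction H using WellFounded.induction ZFSet.mem_wf with
  | _ H ihH =>
  intro K
  induction K using WellFounded.induction ZFSet.mem_wf with
  | _ K ihK =>
  intro Hh Kh
  apply ZFSet.ext
  intro x
  rw [hf, hf]
  constructor
  · rintro (⟨u, hu, rfl⟩ | ⟨K', hK', rfl⟩)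
    · rw [hf] at hu
      rcases hu with ⟨G', hG', rfl⟩ | ⟨H', hH', rfl⟩
      · exact Or.inl ⟨G', hG', by rw [ihG G' hG' Hh Kh Hh Kh]⟩
      · refine Or.inr ⟨f H' Kh Kh, ?_, ?_⟩
        · rw [hf]; exact Or.inl ⟨H', hH', rfl⟩
        · rw [ihH H' hH' Kh Hh Kh]
    · refine Or.inr ⟨f H K' Kh, ?_, ?_⟩
      · rw [hf]; exact Or.inr ⟨K', hK', rfl⟩
      · rw [ihK K' hK' Hh Kh]
  · rintro (⟨G', hG', rfl⟩ | ⟨v, hv, rfl⟩)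
    · refine Or.inl ⟨f G' Hh Hh, ?_, ?_⟩
      · rw [hf]; exact Or.inl ⟨G', hG', rfl⟩
      · rw [ihG G' hG' Hh Kh Hh Kh]
    · rw [hf] at hv
      rcases hv with ⟨H', hH', rfl⟩ | ⟨K', hK', rfl⟩
      · refine Or.inl ⟨f G H' Hh, ?_, ?_⟩
        · rw [hf]; exact Or.inr ⟨H', hH', rfl⟩
        · rw [ihH H' hH' Kh Hh Kh]
      · exact Or.inr ⟨K', hK', by rw [ihK K' hK' Hh Kh]⟩

theorem stmt15 (f : ZFSet → ZFSet → ZFSet → ZFSet) (hf : IsOSub f)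
    (n : ℕ) (hn : 1 ≤ n) (G Gh : ℕ → ZFSet)
    (hG : ∀ i, IsGame (G i)) (hGh : ∀ i, IsGame (Gh i)) :
    chain f G Gh 0 n =
      f (G 0) (chain f G Gh 1 (n - 1)) (chain f Gh Gh 1 (n - 1)) := by
  obtain ⟨m, rfl⟩ : ∃ m, n = m + 1 := ⟨n - 1, by omega⟩
  clear hn
  induction m with
  | zero => simp [chain]
  | succ m ih =>
    show f (chain f G Gh 0 (m + 1)) (G (0 + (m + 1) + 1)) (Gh (0 + (m + 1) + 1)) = _
    rw [ih, key15 f hf]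
    have h1 : f (chain f G Gh 1 (m + 1 - 1)) (G (0 + (m + 1) + 1)) (Gh (0 + (m + 1) + 1))
        = chain f G Gh 1 (m + 1) := by
      show _ = f (chain f G Gh 1 m) (G (1 + m + 1)) (Gh (1 + m + 1))
      norm_num [Nat.add_comm]
    have h2 : f (chain f Gh Gh 1 (m + 1 - 1)) (Gh (0 + (m + 1) + 1)) (Gh (0 + (m + 1) + 1))
        = chain f Gh Gh 1 (m + 1) := by
      show _ = f (chain f Gh Gh 1 m) (Gh (1 + m + 1)) (Gh (1 + m + 1))
      norm_num [Nat.add_comm]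
    rw [h1, h2]
    rfl
end

section
/- For all impartial games G, H, Ĥ, the game G :_{Ĥ} H terminates within b(G)·(b(Ĥ)+1) + b(H) moves, i.e., G :_{Ĥ} H ∈ 𝔾_{b(G)(b(Ĥ)+1)+b(H)}, where b denotes birthday and 𝔾ₙ is the set of games born by day n. -/
lemma Gn_succ_sub : ∀ n, Gn n ⊆ Gn (n + 1) := by
  intro n
  induction n with
  | zero =>
    intro x hx
    have hx' : x = ∅ := by simpa [Gn, ZFSet.mem_singleton] using hx
    subst hx'
    simp [Gn, ZFSet.mem_powerset, ZFSet.empty_subset]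
  | succ n ih =>
    intro x hx
    rw [show Gn (n + 1) = ZFSet.powerset (Gn n) from rfl, ZFSet.mem_powerset] at hx
    rw [show Gn (n + 2) = ZFSet.powerset (Gn (n + 1)) from rfl, ZFSet.mem_powerset]
    exact fun y hy => ih (hx hy)

lemma Gn_mono {a b : ℕ} (h : a ≤ b) : Gn a ⊆ Gn b := by
  induction b with
  | zero => simpa [Nat.le_zero.mp h] using fun x hx => hx
  | succ b ih =>
    rcases Nat.lt_or_ge a (b + 1) with h' | h'
    · exact fun x hx => Gn_succ_sub b (ih (Nat.lt_succ_iff.mp h') hx)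
    · have : a = b + 1 := le_antisymm h h'
      subst this; exact fun x hx => hx

lemma birthday_spec {G : ZFSet} (hG : IsGame G) : G ∈ Gn (birthday G) :=
  Nat.sInf_mem hG

lemma birthday_le {G : ZFSet} {n : ℕ} (h : G ∈ Gn n) : birthday G ≤ n :=
  Nat.sInf_le h

lemma mem_Gn_zero {G : ZFSet} (h : G ∈ Gn 0) : G = ∅ := by
  simpa [Gn, ZFSet.mem_singleton] using h

lemma mem_of_mem_Gn_succ {G G' : ZFSet} {n : ℕ} (h : G ∈ Gn (n + 1)) (h' : G' ∈ G) :
    G' ∈ Gn n := by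
  rw [show Gn (n + 1) = ZFSet.powerset (Gn n) from rfl, ZFSet.mem_powerset] at h
  exact h h'

lemma osub_main (f : ZFSet → ZFSet → ZFSet → ZFSet) (hf : IsOSub f)
    (Hh : ZFSet) (hHh : IsGame Hh) :
    ∀ n G H, IsGame G → IsGame H →
      birthday G * (birthday Hh + 1) + birthday H ≤ n → f G H Hh ∈ Gn n := by
  intro n
  induction n using Nat.strong_induction_on with
  | _ n ih =>
    intro G H hG hH hle
    rcases n with _ | m
    · -- n = 0 : G and H are empty
      have h0 : birthday G * (birthday Hh + 1) = 0 ∧ birthday H = 0 :=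
        Nat.add_eq_zero.mp (Nat.le_zero.mp hle)
      have hbG : birthday G = 0 := by
        rcases Nat.mul_eq_zero.mp h0.1 with h | h
        · exact h
        · omega
      have hGe : G = ∅ := mem_Gn_zero (hbG ▸ birthday_spec hG)
      have hHe : H = ∅ := mem_Gn_zero (h0.2 ▸ birthday_spec hH)
      have : f G H Hh = ∅ := by
        apply ZFSet.ext
        intro x
        simp only [ZFSet.notMem_empty, iff_false]
        intro hx
        rcases (hf G H Hh x).1 hx with ⟨G', hG', _⟩ | ⟨H', hH', _⟩
        · rw [hGe] at hG'; exact ZFSet.notMem_empty _ hG'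
        · rw [hHe] at hH'; exact ZFSet.notMem_empty _ hH'
      rw [this]
      simp [Gn, ZFSet.mem_singleton]
    · -- n = m + 1
      rw [show Gn (m + 1) = ZFSet.powerset (Gn m) from rfl, ZFSet.mem_powerset]
      intro x hx
      rcases (hf G H Hh x).1 hx with ⟨G', hG', rfl⟩ | ⟨H', hH', rfl⟩
      · -- option of G
        have hbG : birthday G ≠ 0 := by
          intro h
          have := mem_Gn_zero (h ▸ birthday_spec hG)
          rw [this] at hG'
          exact ZFSet.notMem_empty _ hG'
        obtain ⟨k, hk⟩ := Nat.exists_eq_succ_of_ne_zero hbG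
        have hGm : G ∈ Gn (k + 1) := by have := birthday_spec hG; rwa [hk] at this
        have hG'mem : G' ∈ Gn k := mem_of_mem_Gn_succ hGm hG'
        have hG'game : IsGame G' := ⟨k, hG'mem⟩
        have hbG' : birthday G' ≤ k := birthday_le hG'mem
        apply ih m (Nat.lt_succ_self m) G' Hh hG'game hHh
        have h1 : birthday G' * (birthday Hh + 1) ≤ k * (birthday Hh + 1) :=
          Nat.mul_le_mul_right _ hbG'
        have h2 : (k + 1) * (birthday Hh + 1) = k * (birthday Hh + 1) + birthday Hh + 1 := by
          ring
        rw [hk, h2] at hle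
        omega
      · -- option of H
        have hbH : birthday H ≠ 0 := by
          intro h
          have := mem_Gn_zero (h ▸ birthday_spec hH)
          rw [this] at hH'
          exact ZFSet.notMem_empty _ hH'
        obtain ⟨k, hk⟩ := Nat.exists_eq_succ_of_ne_zero hbH
        have hHm : H ∈ Gn (k + 1) := by have := birthday_spec hH; rwa [hk] at this
        have hH'mem : H' ∈ Gn k := mem_of_mem_Gn_succ hHm hH'
        have hH'game : IsGame H' := ⟨k, hH'mem⟩
        have hbH' : birthday H' ≤ k := birthday_le hH'mem
        apply ih m (Nat.lt_succ_self m) G H' hG hH'game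
        rw [hk] at hle
        omega

theorem stmt16 (f : ZFSet → ZFSet → ZFSet → ZFSet) (hf : IsOSub f)
    (G H Hh : ZFSet) (hG : IsGame G) (hH : IsGame H) (hHh : IsGame Hh) :
    f G H Hh ∈ Gn (birthday G * (birthday Hh + 1) + birthday H) := by
  exact osub_main f hf Hh hHh _ G H hG hH le_rfl
end
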